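/- arXiv:2207.04599 — 2 statements merged into one kernel-verified Lean document; each statement's English description precedes it below -/
import Mathlib

section
/- Let G be a connected nonsingular bipartite simple graph on n vertices with largest adjacency eigenvalue λ₁ ≥ 7.11. Then E(G) ≥ n − 2 + 2λ₁ − 2·ln λ₁, and consequently E(G) ≥ n − 1 + λ₁, since λ₁ − 2 ln λ₁ − 1 > 0 for λ₁ ≥ 7.11. -/
/-!
A 2-colouring gives a diagonal ±1 matrix `D` with `D A D = -A`, so the spectrum of a bipartite
graph is symmetric and `-λ₁` is an eigenvalue too. Since `det A` is a nonzero integer, the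
eigenvalues `λᵢ` satisfy `∑ log |λᵢ| ≥ 0`. Summing `|λᵢ| ≥ 1 + log |λᵢ|` over all eigenvalues
other than `±λ₁` then gives `E(G) ≥ n - 2 + 2λ₁ - 2 log λ₁`, and `2 log λ₁ ≤ λ₁ - 1` once `λ₁ ≥ 4`.
-/

open Finset Matrix

namespace SimpleGraph

variable {V : Type*} [Fintype V] [DecidableEq V] (G : SimpleGraph V) [DecidableRel G.Adj]

theorem det_adjMatrix_eq_intCast (R : Type*) [CommRing R] :
    (G.adjMatrix R).det = ((G.adjMatrix ℤ).det : R) := by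
  rw [← eq_intCast (Int.castRingHom R), RingHom.map_det, RingHom.mapMatrix_apply]
  congr 1
  ext u v
  simp [adjMatrix_apply, apply_ite (Int.cast : ℤ → R)]

theorem one_le_abs_det_adjMatrix {R : Type*} [CommRing R] [LinearOrder R] [IsStrictOrderedRing R]
    (h : (G.adjMatrix R).det ≠ 0) : 1 ≤ |(G.adjMatrix R).det| := by
  rw [det_adjMatrix_eq_intCast] at h ⊢
  rw [← Int.cast_abs]
  exact_mod_cast Int.one_le_abs (by exact_mod_cast h)

variable {G}

theorem Coloring.signs_mul_adjMatrix_mul_signs {R : Type*} [CommRing R] (C : G.Coloring (Fin 2)) :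
    diagonal (fun v => (-1 : R) ^ (C v : ℕ)) * G.adjMatrix R *
      diagonal (fun v => (-1 : R) ^ (C v : ℕ)) = -G.adjMatrix R := by
  ext u v
  rw [mul_diagonal, diagonal_mul, neg_apply, adjMatrix_apply]
  split_ifs with h
  · have := C.valid h
    generalize C u = a, C v = b at this
    fin_cases a <;> fin_cases b <;> simp_all
  · simp

theorem Colorable.neg_spectrum_adjMatrix {R : Type*} [CommRing R] (h : G.Colorable 2) :
    -spectrum R (G.adjMatrix R) = spectrum R (G.adjMatrix R) := by
  obtain ⟨C⟩ := h
  have hsq : diagonal (fun v => (-1 : R) ^ (C v : ℕ)) * diagonal (fun v => (-1 : R) ^ (C v : ℕ))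
      = 1 := by
    simp [diagonal_mul_diagonal, ← pow_add, ← two_mul, pow_mul]
  let D : (Matrix V V R)ˣ := ⟨_, _, hsq, hsq⟩
  rw [spectrum.neg_eq, ← C.signs_mul_adjMatrix_mul_signs]
  exact spectrum.units_conjugate (u := D)

end SimpleGraph

theorem Real.two_mul_log_le_sub_one {x : ℝ} (hx : 4 ≤ x) : 2 * Real.log x ≤ x - 1 := by
  have he := Real.exp_one_gt_d9
  have he' := Real.exp_one_lt_d9
  have hlog : Real.log x ≤ x / Real.exp 1 := by
    have := Real.log_le_sub_one_of_pos (show 0 < x / Real.exp 1 by positivity)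
    rw [Real.log_div (by positivity) (by positivity), Real.log_exp] at this
    linarith
  have : 2 * (x / Real.exp 1) ≤ x - 1 := by
    rw [← mul_div_assoc, div_le_iff₀ (by positivity)]
    nlinarith
  linarith

theorem Real.card_sub_two_add_le_sum_abs_of_one_le_abs_prod {ι : Type*} [Fintype ι] [DecidableEq ι] (x : ι → ℝ)
    (hx : 1 ≤ |∏ k, x k|) {i j : ι} (hij : i ≠ j) :
    (Fintype.card ι : ℝ) - 2 + (|x i| - Real.log |x i|) + (|x j| - Real.log |x j|)
      ≤ ∑ k, |x k| := by
  have hne : ∀ k, x k ≠ 0 := fun k h => by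
    norm_num [Finset.prod_eq_zero (mem_univ k) h] at hx
  set φ : ℝ → ℝ := fun y => y - 1 - Real.log y
  have hφ : ∀ k, 0 ≤ φ |x k| := fun k => by
    linarith [Real.log_le_sub_one_of_pos (abs_pos.mpr (hne k))]
  have hpair : φ |x i| + φ |x j| ≤ ∑ k, φ |x k| := by
    rw [← Finset.sum_pair (f := fun k => φ |x k|) hij]
    exact Finset.sum_le_sum_of_subset_of_nonneg (subset_univ _) fun k _ _ => hφ k
  have hsum : ∑ k, φ |x k| = ∑ k, |x k| - Fintype.card ι - Real.log |∏ k, x k| := by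
    rw [Finset.abs_prod, Real.log_prod fun k _ => abs_ne_zero.mpr (hne k)]
    simp [φ, Finset.sum_sub_distrib]
  have hlog : 0 ≤ Real.log |∏ k, x k| := Real.log_nonneg hx
  simp only [φ] at hpair
  linarith

theorem stmt_12_general {V : Type*} [Fintype V] [DecidableEq V]
    (G : SimpleGraph V) [DecidableRel G.Adj]
    (hbip : G.Colorable 2)
    (hA : (G.adjMatrix ℝ).IsHermitian)
    (hdet : (G.adjMatrix ℝ).det ≠ 0)
    (lam1 : ℝ) (hlam1 : 7.11 ≤ lam1)
    (hmem : ∃ i, hA.eigenvalues i = lam1) :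
    ∑ i, |hA.eigenvalues i| ≥ (Fintype.card V : ℝ) - 2 + 2 * lam1 - 2 * Real.log lam1 ∧
      ∑ i, |hA.eigenvalues i| ≥ (Fintype.card V : ℝ) - 1 + lam1 := by
  obtain ⟨i, hi⟩ := hmem
  obtain ⟨j, hj⟩ : -lam1 ∈ Set.range hA.eigenvalues := by
    rw [← hA.spectrum_real_eq_range_eigenvalues, ← hbip.neg_spectrum_adjMatrix, Set.neg_mem_neg,
      hA.spectrum_real_eq_range_eigenvalues]
    exact ⟨i, hi⟩
  have hpos : 0 < lam1 := by linarith
  have hij : i ≠ j := fun h => by linarith [hi ▸ h ▸ hj]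
  have hprod : 1 ≤ |∏ k, hA.eigenvalues k| := by
    simpa [hA.det_eq_prod_eigenvalues] using G.one_le_abs_det_adjMatrix hdet
  have key := Real.card_sub_two_add_le_sum_abs_of_one_le_abs_prod hA.eigenvalues hprod hij
  rw [hi, hj, abs_neg, abs_of_pos hpos] at key
  constructor
  · linarith
  · linarith [Real.two_mul_log_le_sub_one (x := lam1) (by linarith)]

theorem stmt_12 {V : Type*} [Fintype V] [DecidableEq V]
    (G : SimpleGraph V) [DecidableRel G.Adj]
    (hconn : G.Connected) (hbip : G.Colorable 2)
    (hA : (G.adjMatrix ℝ).IsHermitian)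
    (hdet : (G.adjMatrix ℝ).det ≠ 0)
    (lam1 : ℝ) (hlam1 : 7.11 ≤ lam1)
    (hmax : ∀ i, hA.eigenvalues i ≤ lam1) (hmem : ∃ i, hA.eigenvalues i = lam1) :
    ∑ i, |hA.eigenvalues i| ≥ (Fintype.card V : ℝ) - 2 + 2 * lam1 - 2 * Real.log lam1 ∧
      ∑ i, |hA.eigenvalues i| ≥ (Fintype.card V : ℝ) - 1 + lam1 :=
  stmt_12_general G hbip hA hdet lam1 hlam1 hmem
end

section
/- Let G be a nonsingular simple graph on n vertices with m edges, largest eigenvalue μ₁ = λ₁ > 1 and second largest absolute eigenvalue μ₂ > 0. If (μ₁ − 2m/n) + (2m − n + 1 − μ₁²)/(2μ₂ + 1) ≥ (2μ₂/(2μ₂+1))·ln μ₁, then E(G) ≥ n − 1 + 2m/n. -/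
/-!
Write `x i = |λ i|` for the eigenvalues other than `μ₁`. Three spectral facts feed a purely real
inequality: `∏ |λ i| = |det A| ≥ 1` since `A` is a nonsingular integer matrix, so
`∑ log (x i) ≥ -log μ₁`; `∑ λ i ^ 2 = tr A² = 2m`; and the Rayleigh quotient of the all-ones
vector gives `2m/n ≤ μ₁`. On `(0, μ₂]` the function `2 μ₂ log x + x² - 1` lies below the line
`k (x - 1)` for some `k ≥ 2 μ₂ + 1`; summing this over the `x i` and combining with the hypothesis
gives `∑ x i ≥ n - 1 + 2m/n - μ₁`.
-/

open Finset Matrix Real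

lemma two_mul_log_add_sq_sub_one_le_of_le_one {c x : ℝ} (hc : 0 ≤ c) (hx : 0 < x)
    (hx1 : x ≤ 1) : 2 * c * log x + x ^ 2 - 1 ≤ (2 * c + 1) * (x - 1) := by
  nlinarith [log_le_sub_one_of_pos hx]

lemma two_mul_log_add_sq_sub_one_le {c x : ℝ} (hc : 1 ≤ c) (hx : 0 < x) (hxc : x ≤ c) :
    2 * c * log x + x ^ 2 - 1 ≤ (2 * c + 2) * (x - 1) := by
  set h : ℝ → ℝ := fun y ↦ (2 * c + 2) * (y - 1) - 2 * c * log y - y ^ 2 + 1 with h_def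
  have hderiv : ∀ y, 0 < y → HasDerivAt h (-2 * (y - 1) * (y - c) / y) y := by
    intro y hy
    have := ((((hasDerivAt_id y).sub_const 1).const_mul (2 * c + 2)).sub
      ((hasDerivAt_log hy.ne').const_mul (2 * c))).sub (hasDerivAt_pow 2 y) |>.add_const 1
    refine this.congr_deriv ?_
    push_cast
    field_simp
    ring
  have hderivWithin : ∀ a b, 0 < a → ∀ y ∈ interior (Set.Icc a b),
      HasDerivWithinAt h (-2 * (y - 1) * (y - c) / y) (interior (Set.Icc a b)) y := by
    intro a b ha y hy
    rw [interior_Icc] at hy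
    exact (hderiv y (ha.trans hy.1)).hasDerivWithinAt
  -- `h` decreases on `(0, 1]` and increases on `[1, c]`, and `h 1 = 0`.
  have h_one : h 1 = 0 := by simp [h_def]
  suffices 0 ≤ h x by simp only [h_def] at this; linarith
  rcases le_total x 1 with hx1 | hx1
  · have hanti : AntitoneOn h (Set.Icc x 1) :=
      antitoneOn_of_hasDerivWithinAt_nonpos (convex_Icc x 1)
        (fun y hy ↦ (hderiv y (hx.trans_le hy.1)).continuousAt.continuousWithinAt)
        (hderivWithin x 1 hx) fun y hy ↦ by
          rw [interior_Icc] at hy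
          have hy0 : 0 < y := hx.trans hy.1
          apply div_nonpos_of_nonpos_of_nonneg _ hy0.le
          nlinarith [hy.2]
    rw [← h_one]
    exact hanti ⟨le_rfl, hx1⟩ ⟨hx1, le_rfl⟩ hx1
  · have hmono : MonotoneOn h (Set.Icc 1 x) :=
      monotoneOn_of_hasDerivWithinAt_nonneg (convex_Icc 1 x)
        (fun y hy ↦ (hderiv y (one_pos.trans_le hy.1)).continuousAt.continuousWithinAt)
        (hderivWithin 1 x one_pos) fun y hy ↦ by
          rw [interior_Icc] at hy
          have hy0 : 0 < y := one_pos.trans hy.1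
          apply div_nonneg _ hy0.le
          nlinarith [mul_nonneg (sub_nonneg.2 hy.1.le) (sub_nonneg.2 (hy.2.le.trans hxc))]
    rw [← h_one]
    exact hmono ⟨le_rfl, hx1⟩ ⟨hx1, le_rfl⟩ hx1

/- The slope `2 * c + 1` fails just above `x = 1`, so once `c > 1` the tangent slope at `x = 1`,
`2 * c + 2`, is needed. -/
lemma exists_two_mul_log_add_sq_sub_one_le {c : ℝ} (hc : 0 ≤ c) :
    ∃ k ≥ 2 * c + 1, ∀ x, 0 < x → x ≤ c → 2 * c * log x + x ^ 2 - 1 ≤ k * (x - 1) := by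
  rcases le_total c 1 with hc1 | hc1
  · exact ⟨2 * c + 1, le_rfl, fun x hx hxc ↦
      two_mul_log_add_sq_sub_one_le_of_le_one hc hx (hxc.trans hc1)⟩
  · exact ⟨2 * c + 2, by linarith, fun x hx hxc ↦ two_mul_log_add_sq_sub_one_le hc1 hx hxc⟩

lemma card_add_le_add_sum_of_log_nonneg {ι : Type*} (s : Finset ι) (x : ι → ℝ) {c μ d : ℝ}
    (hc : 0 ≤ c) (hx : ∀ i ∈ s, 0 < x i ∧ x i ≤ c) (hlog : 0 ≤ log μ + ∑ i ∈ s, log (x i))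
    (hd : d ≤ μ) (hcond : 2 * c * log μ ≤ (2 * c + 1) * (μ - d) + (∑ i ∈ s, x i ^ 2 - #s)) :
    #s + d ≤ μ + ∑ i ∈ s, x i := by
  obtain ⟨k, hk, hkx⟩ := exists_two_mul_log_add_sq_sub_one_le hc
  have hsum : 2 * c * ∑ i ∈ s, log (x i) + ∑ i ∈ s, x i ^ 2 - #s ≤ k * (∑ i ∈ s, x i - #s) := by
    have := sum_le_sum fun i hi ↦ hkx (x i) (hx i hi).1 (hx i hi).2
    simpa only [sum_sub_distrib, sum_add_distrib, ← mul_sum, sum_const, nsmul_one,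
      nsmul_eq_mul, mul_one] using this
  rcases le_total (#s : ℝ) (∑ i ∈ s, x i) with hS | hS
  · linarith
  · nlinarith [mul_le_mul_of_nonpos_right hk (sub_nonpos.2 hS), mul_nonneg hc hlog]

namespace Matrix.IsHermitian

variable {n : Type*} [Fintype n] [DecidableEq n] {A : Matrix n n ℝ} (hA : A.IsHermitian)

lemma trace_mul_self_eq_sum_sq_eigenvalues : (A * A).trace = ∑ i, hA.eigenvalues i ^ 2 := by
  conv_lhs => rw [hA.spectral_theorem]
  rw [← map_mul, Unitary.conjStarAlgAut_apply, trace_mul_cycle,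
    Unitary.coe_star_mul_self, one_mul, diagonal_mul_diagonal, trace_diagonal]
  simp [sq]

lemma posSemidef_smul_one_sub_of_eigenvalues_le {r : ℝ} (hr : ∀ i, hA.eigenvalues i ≤ r) :
    (r • 1 - A).PosSemidef := by
  have hdiag : (r • 1 - diagonal (RCLike.ofReal ∘ hA.eigenvalues) : Matrix n n ℝ) =
      diagonal fun i ↦ r - hA.eigenvalues i := by
    ext i j; by_cases h : i = j <;> simp [h, diagonal]
  rw [hA.spectral_theorem, ← map_one (Unitary.conjStarAlgAut ℝ _ hA.eigenvectorUnitary),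
    ← map_smul, ← map_sub, hdiag, Unitary.conjStarAlgAut_apply]
  exact (posSemidef_diagonal_iff.2 fun i ↦ sub_nonneg.2 (hr i)).mul_mul_conjTranspose_same _

lemma dotProduct_mulVec_le_of_eigenvalues_le {r : ℝ} (hr : ∀ i, hA.eigenvalues i ≤ r)
    (x : n → ℝ) : x ⬝ᵥ A *ᵥ x ≤ r * (x ⬝ᵥ x) := by
  have := (hA.posSemidef_smul_one_sub_of_eigenvalues_le hr).dotProduct_mulVec_nonneg x
  rwa [star_trivial, sub_mulVec, smul_mulVec, one_mulVec, dotProduct_sub, dotProduct_smul,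
    smul_eq_mul, sub_nonneg] at this

lemma eigenvalues_ne_zero (hdet : A.det ≠ 0) (i : n) : hA.eigenvalues i ≠ 0 := by
  rw [hA.det_eq_prod_eigenvalues] at hdet
  simpa using prod_ne_zero_iff.1 hdet i (mem_univ i)

lemma abs_det_eq_prod_abs_eigenvalues : |A.det| = ∏ i, |hA.eigenvalues i| := by
  simp [hA.det_eq_prod_eigenvalues, abs_prod]

end Matrix.IsHermitian

namespace SimpleGraph

variable {V : Type*} [Fintype V] (G : SimpleGraph V) [DecidableRel G.Adj]

lemma trace_adjMatrix_mul_self : (G.adjMatrix ℝ * G.adjMatrix ℝ).trace = 2 * #G.edgeFinset := by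
  simp only [trace, diag_apply, adjMatrix_mul_self_apply_self]
  exact_mod_cast G.sum_degrees_eq_twice_card_edges

lemma dotProduct_adjMatrix_mulVec_one : (1 : V → ℝ) ⬝ᵥ G.adjMatrix ℝ *ᵥ 1 = 2 * #G.edgeFinset := by
  rw [dotProduct_comm, ← natCast_card_dart_eq_dotProduct, dart_card_eq_twice_card_edges]
  push_cast; rfl

lemma one_le_abs_det_adjMatrix_s16 [DecidableEq V] (hdet : (G.adjMatrix ℝ).det ≠ 0) :
    1 ≤ |(G.adjMatrix ℝ).det| := by
  have hcast : (G.adjMatrix ℝ).det = ((G.adjMatrix ℤ).det : ℝ) := by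
    rw [show ((G.adjMatrix ℤ).det : ℝ) = _ from (Int.castRingHom ℝ).map_det _]
    congr 1
    ext i j
    simp [adjMatrix_apply]
  rw [hcast] at hdet ⊢
  exact_mod_cast Int.one_le_abs (by exact_mod_cast hdet)

end SimpleGraph

theorem stmt_16_general {V : Type*} [Fintype V] [DecidableEq V]
    (G : SimpleGraph V) [DecidableRel G.Adj]
    (hA : (G.adjMatrix ℝ).IsHermitian)
    (hdet : (G.adjMatrix ℝ).det ≠ 0)
    (mu1 mu2 : ℝ) (hmu1 : 1 < mu1) (hmu2 : 0 < mu2)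
    (i0 : V) (hi0 : hA.eigenvalues i0 = mu1)
    (hmax1 : ∀ i, |hA.eigenvalues i| ≤ mu1)
    (hmax2 : ∀ i, i ≠ i0 → |hA.eigenvalues i| ≤ mu2)
    (hcond : (mu1 - 2 * (G.edgeFinset.card : ℝ) / (Fintype.card V : ℝ)) +
        (2 * (G.edgeFinset.card : ℝ) - (Fintype.card V : ℝ) + 1 - mu1 ^ 2) / (2 * mu2 + 1) ≥
        (2 * mu2 / (2 * mu2 + 1)) * Real.log mu1) :
    ∑ i, |hA.eigenvalues i| ≥
      (Fintype.card V : ℝ) - 1 + 2 * (G.edgeFinset.card : ℝ) / (Fintype.card V : ℝ) := by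
  have : Nonempty V := ⟨i0⟩
  set s := univ.erase i0
  have hsplit (f : V → ℝ) : ∑ i, f i = f i0 + ∑ i ∈ s, f i :=
    (add_sum_erase _ _ (mem_univ i0)).symm
  have hn : (0 : ℝ) < Fintype.card V := by exact_mod_cast Fintype.card_pos
  have hcard : (#s : ℝ) = Fintype.card V - 1 := by
    rw [card_erase_of_mem (mem_univ i0), card_univ, Nat.cast_pred Fintype.card_pos]
  have habs_i0 : |hA.eigenvalues i0| = mu1 := by rw [hi0, abs_of_pos (by linarith)]
  have hlog : 0 ≤ log mu1 + ∑ i ∈ s, log |hA.eigenvalues i| := by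
    have := log_nonneg (G.one_le_abs_det_adjMatrix_s16 hdet)
    rwa [hA.abs_det_eq_prod_abs_eigenvalues,
      log_prod fun i _ ↦ abs_ne_zero.2 (hA.eigenvalues_ne_zero hdet i), hsplit, habs_i0] at this
  have hsq : mu1 ^ 2 + ∑ i ∈ s, |hA.eigenvalues i| ^ 2 = 2 * #G.edgeFinset := by
    have := hA.trace_mul_self_eq_sum_sq_eigenvalues
    rw [G.trace_adjMatrix_mul_self, hsplit, hi0] at this
    simpa only [sq_abs] using this.symm
  have hd : 2 * #G.edgeFinset / (Fintype.card V : ℝ) ≤ mu1 := by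
    have := hA.dotProduct_mulVec_le_of_eigenvalues_le (fun i ↦ (le_abs_self _).trans (hmax1 i)) 1
    rw [G.dotProduct_adjMatrix_mulVec_one, one_dotProduct_one] at this
    exact (div_le_iff₀ hn).2 this
  rw [hsplit, habs_i0, ge_iff_le, ← hcard]
  refine card_add_le_add_sum_of_log_nonneg s _ hmu2.le
    (fun i hi ↦ ⟨abs_pos.2 (hA.eigenvalues_ne_zero hdet i), hmax2 i (ne_of_mem_erase hi)⟩)
    hlog hd ?_
  have hc : 0 < 2 * mu2 + 1 := by linarith
  rw [hcard, eq_sub_of_add_eq' hsq]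
  rw [ge_iff_le, div_mul_eq_mul_div, div_le_iff₀ hc, add_mul, div_mul_cancel₀ _ hc.ne'] at hcond
  linarith

theorem stmt_16 {V : Type*} [Fintype V] [DecidableEq V]
    (G : SimpleGraph V) [DecidableRel G.Adj]
    (hA : (G.adjMatrix ℝ).IsHermitian)
    (hdet : (G.adjMatrix ℝ).det ≠ 0)
    (mu1 mu2 : ℝ) (hmu1 : 1 < mu1) (hmu2 : 0 < mu2)
    (i0 : V) (hi0 : hA.eigenvalues i0 = mu1)
    (hmax1 : ∀ i, |hA.eigenvalues i| ≤ mu1)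
    (hmax2 : ∀ i, i ≠ i0 → |hA.eigenvalues i| ≤ mu2)
    (hmem2 : ∃ i, i ≠ i0 ∧ |hA.eigenvalues i| = mu2)
    (hcond : (mu1 - 2 * (G.edgeFinset.card : ℝ) / (Fintype.card V : ℝ)) +
        (2 * (G.edgeFinset.card : ℝ) - (Fintype.card V : ℝ) + 1 - mu1 ^ 2) / (2 * mu2 + 1) ≥
        (2 * mu2 / (2 * mu2 + 1)) * Real.log mu1) :
    ∑ i, |hA.eigenvalues i| ≥
      (Fintype.card V : ℝ) - 1 + 2 * (G.edgeFinset.card : ℝ) / (Fintype.card V : ℝ) :=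
  stmt_16_general G hA hdet mu1 mu2 hmu1 hmu2 i0 hi0 hmax1 hmax2 hcond
end
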